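/- arXiv:0707.0114 — 2 statements merged into one kernel-verified Lean document; each statement's English description precedes it below -/
import Mathlib

section
/- Let V be a finite type and E : V → V → Prop a directed graph relation that is acyclic, in the sense that the transitive closure of E is irreflexive. Fix vertices s, t : V and assume that every vertex of V lies on some directed path from s to t. Then the minimum cardinality of a set of directed paths from s to t whose vertices jointly cover all of V equals the maximum cardinality of a reachability antichain in V, i.e., of a subset Q ⊆ V such that for any two distinct q, q' ∈ Q, neither is reachable from the other under the reflexive-transitive closure of E. In particular, every minimum-size cover of V by s–t paths has this same cardinality. -/
/-!
Reachability in an acyclic graph is a partial order, and every vertex lies between `s` and `t`.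
A path is a chain of this order, so an antichain meets each path of a cover at most once.
Conversely, Dilworth's theorem (by Galvin's induction on the number of elements) splits the
vertices into as many chains as a largest antichain has elements, and each chain, padded by `s`
and `t` and with its gaps filled by walks, lies on an `s`–`t` walk, which acyclicity makes a path.
-/

/-- A directed path from `s` to `t`: a duplicate-free list of vertices starting at
`s`, ending at `t`, in which each consecutive pair is related by `E`. -/
def IsSTPath {V : Type*} (E : V → V → Prop) (s t : V) (p : List V) : Prop :=
  p.Chain' E ∧ p.Nodup ∧ p.head? = some s ∧ p.getLast? = some t

open Finset Relation

theorem IsChain.exists_isGreatest_of_finset {α : Type*} [Preorder α] {c : Finset α}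
    (hc : IsChain (· ≤ ·) (c : Set α)) (hne : c.Nonempty) :
    ∃ m, IsGreatest (c : Set α) m := by
  obtain ⟨m, hm⟩ := c.exists_maximal hne
  exact ⟨m, hm.prop, fun x hx => (hc.total hx hm.prop).elim id (hm.le_of_ge hx)⟩

section Dilworth

variable {α : Type*} [PartialOrder α]

theorem IsAntichain.card_le_of_forall_mem_chain {ι : Type*} {A : Finset α}
    (hA : IsAntichain (· ≤ ·) (A : Set α)) {C : Finset ι} {c : ι → Set α}
    (hc : ∀ i ∈ C, IsChain (· ≤ ·) (c i)) (hAC : ∀ a ∈ A, ∃ i ∈ C, a ∈ c i) :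
    #A ≤ #C :=
  card_le_card_of_forall_subsingleton (fun a i => a ∈ c i) hAC fun i hi _ ha _ hb =>
    ((hc i hi).total ha.2 hb.2).elim (hA.eq ha.1 hb.1) fun h => (hA.eq hb.1 ha.1 h).symm

/-- A partition of `s` into at most `k` chains, encoded as a colouring by `0, …, k - 1`. -/
def IsChainColoring (s : Finset α) (k : ℕ) (f : α → ℕ) : Prop :=
  (∀ x ∈ s, f x < k) ∧ ∀ x ∈ s, ∀ y ∈ s, f x = f y → x ≤ y ∨ y ≤ x

namespace IsChainColoring

variable {s A : Finset α} {k : ℕ} {f : α → ℕ}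

theorem injOn_of_isAntichain (hf : IsChainColoring s k f) (hAs : A ⊆ s)
    (hA : IsAntichain (· ≤ ·) (A : Set α)) : Set.InjOn f A := fun a ha b hb hab =>
  (hf.2 a (hAs ha) b (hAs hb) hab).elim (hA.eq ha hb) fun h => (hA.eq hb ha h).symm

theorem card_le_of_isAntichain (hf : IsChainColoring s k f) (hAs : A ⊆ s)
    (hA : IsAntichain (· ≤ ·) (A : Set α)) : #A ≤ k := by
  simpa using card_le_card_of_injOn f (t := range k)
    (fun a ha => mem_range.2 (hf.1 a (hAs ha))) (hf.injOn_of_isAntichain hAs hA)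

theorem exists_mem_antichain_eq (hf : IsChainColoring s k f) (hAs : A ⊆ s)
    (hA : IsAntichain (· ≤ ·) (A : Set α)) (hAk : #A = k) {i : ℕ} (hi : i < k) :
    ∃ a ∈ A, f a = i := by
  have himage : A.image f = range k := by
    refine eq_of_subset_of_card_le (fun j hj => ?_) ?_
    · obtain ⟨a, ha, rfl⟩ := mem_image.1 hj
      exact mem_range.2 (hf.1 a (hAs ha))
    · rw [card_image_of_injOn (hf.injOn_of_isAntichain hAs hA), card_range, hAk]
  rw [← mem_range, ← himage, mem_image] at hi
  exact hi

theorem extend [DecidableEq α] {t K : Finset α} {j : ℕ} {g : α → ℕ}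
    (hg : IsChainColoring t j g) (hK : IsChain (· ≤ ·) (K : Set α)) (hs : s ⊆ t ∪ K)
    (hjk : j < k) : IsChainColoring s k fun x => if x ∈ K then j else g x := by
  have hgt : ∀ x ∈ s, x ∉ K → x ∈ t := fun x hx hxK =>
    (mem_union.1 (hs hx)).resolve_right hxK
  refine ⟨fun x hx => ?_, fun x hx y hy hxy => ?_⟩
  · dsimp only
    split_ifs with hxK
    · exact hjk
    · exact (hg.1 x (hgt x hx hxK)).trans hjk
  · by_cases hxK : x ∈ K <;> by_cases hyK : y ∈ K <;>
      simp only [hxK, hyK, if_true, if_false] at hxy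
    · exact hK.total hxK hyK
    · exact absurd hxy (hg.1 y (hgt y hy hyK)).ne'
    · exact absurd hxy (hg.1 x (hgt x hx hxK)).ne
    · exact hg.2 x (hgt x hx hxK) y (hgt y hy hyK) hxy

theorem isChain_filter (hf : IsChainColoring s k f) (i : ℕ) :
    IsChain (· ≤ ·) (↑(s.filter (f · = i)) : Set α) := fun x hx y hy _ => by
  simp only [mem_coe, mem_filter] at hx hy
  exact hf.2 x hx.1 y hy.1 (hx.2.trans hy.2.symm)

theorem exists_le_top (hf : IsChainColoring s k f) {M : Finset α} (hMs : M ⊆ s) {y : α}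
    (hy : y ∈ M) : ∃ m ∈ M, f m = f y ∧ y ≤ m ∧ ∀ z ∈ M, f z = f m → z ≤ m := by
  obtain ⟨m, hm, hmax⟩ := ((hf.isChain_filter (f y)).mono (coe_subset.2
    (filter_subset_filter _ hMs))).exists_isGreatest_of_finset ⟨y, mem_filter.2 ⟨hy, rfl⟩⟩
  simp only [coe_filter] at hm hmax
  exact ⟨m, hm.1, hm.2, hmax ⟨hy, rfl⟩, fun z hz hzm => hmax ⟨hz, hzm.trans hm.2⟩⟩

theorem exists_tops (hf : IsChainColoring s k f) (hAs : A ⊆ s)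
    (hA : IsAntichain (· ≤ ·) (A : Set α)) (hAk : #A = k) :
    ∃ T ⊆ s, IsAntichain (· ≤ ·) (T : Set α) ∧ #T = k ∧
      ∀ B ⊆ s, IsAntichain (· ≤ ·) (B : Set α) → #B = k →
        ∀ y ∈ B, ∃ m ∈ T, f m = f y ∧ y ≤ m := by
  classical
  -- `T` consists of the tops of the colour classes within the union `M` of the antichains of
  -- size `k`.
  set M := s.filter fun y => ∃ B ⊆ s, IsAntichain (· ≤ ·) (B : Set α) ∧ #B = k ∧ y ∈ B
  set T := M.filter fun m => ∀ z ∈ M, f z = f m → z ≤ m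
  have hTs : T ⊆ s := (filter_subset _ _).trans (filter_subset _ _)
  have hTB : ∀ B ⊆ s, IsAntichain (· ≤ ·) (B : Set α) → #B = k → ∀ y ∈ B,
      ∃ m ∈ T, f m = f y ∧ y ≤ m := fun B hBs hB hBk y hy => by
    obtain ⟨m, hmM, hmy, hym, hmax⟩ := hf.exists_le_top (M := M) (filter_subset _ _)
      (mem_filter.2 ⟨hBs hy, B, hBs, hB, hBk, hy⟩)
    exact ⟨m, mem_filter.2 ⟨hmM, hmax⟩, hmy, hym⟩
  -- Galvin's observation: if `m ≤ m'` are tops, an antichain of size `k` through `m'` meets the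
  -- colour class of `m` below `m`, hence in `m'`.
  have hT : IsAntichain (· ≤ ·) (T : Set α) := fun m hm m' hm' hne hmm' => hne <| by
    simp only [T, mem_coe, mem_filter] at hm hm'
    obtain ⟨B, hBs, hB, hBk, hm'B⟩ := (mem_filter.1 hm'.1).2
    obtain ⟨y, hyB, hy⟩ :=
      hf.exists_mem_antichain_eq hBs hB hBk (hf.1 m (mem_filter.1 hm.1).1)
    have hyM : y ∈ M := mem_filter.2 ⟨hBs hyB, B, hBs, hB, hBk, hyB⟩
    have hym' : y = m' := hB.eq hyB hm'B ((hm.2 y hyM hy).trans hmm')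
    exact le_antisymm hmm' (hm.2 m' hm'.1 (hym' ▸ hy))
  refine ⟨T, hTs, hT, le_antisymm (hf.card_le_of_isAntichain hTs hT) ?_, hTB⟩
  calc k = #(range k) := (card_range k).symm
    _ ≤ #(T.image f) := card_le_card fun i hi => by
      obtain ⟨a, ha, rfl⟩ := hf.exists_mem_antichain_eq hAs hA hAk (mem_range.1 hi)
      obtain ⟨m, hm, hma, -⟩ := hTB A hAs hA hAk a ha
      exact mem_image.2 ⟨m, hm, hma⟩
    _ ≤ #T := card_image_le

theorem card_lt_of_tops (hf : IsChainColoring s k f) {T : Finset α} (hTs : T ⊆ s)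
    (hT : IsAntichain (· ≤ ·) (T : Set α))
    (hTB : ∀ B ⊆ s, IsAntichain (· ≤ ·) (B : Set α) → #B = k →
      ∀ y ∈ B, ∃ m ∈ T, f m = f y ∧ y ≤ m)
    {m : α} (hm : m ∈ T) {B : Finset α} (hBs : B ⊆ s) (hB : IsAntichain (· ≤ ·) (B : Set α))
    (hBm : ∀ y ∈ B, f y = f m → ¬ y ≤ m) : #B < k := by
  by_contra! hkB
  have hBk : #B = k := le_antisymm (hf.card_le_of_isAntichain hBs hB) hkB
  obtain ⟨y, hyB, hy⟩ := hf.exists_mem_antichain_eq hBs hB hBk (hf.1 m (hTs hm))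
  obtain ⟨m', hm', hm'y, hym'⟩ := hTB B hBs hB hBk y hyB
  have : m' = m := hf.injOn_of_isAntichain hTs hT hm' hm (hm'y.trans hy)
  exact hBm y hyB hy (this ▸ hym')

end IsChainColoring

theorem exists_isAntichain_isChainColoring (s : Finset α) :
    ∃ A ⊆ s, IsAntichain (· ≤ ·) (A : Set α) ∧ ∃ f : α → ℕ, IsChainColoring s #A f := by
  classical
  induction s using Finset.strongInduction with | H s ih =>
  obtain rfl | hs := s.eq_empty_or_nonempty
  · exact ⟨∅, empty_subset _, by simp, 0, by simp [IsChainColoring]⟩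
  obtain ⟨a, ha⟩ := s.exists_maximal hs
  have has : s ⊆ s.erase a ∪ {a} := by simp [insert_erase ha.prop]
  obtain ⟨A, hAs, hA, f, hf⟩ := ih (s.erase a) (erase_ssubset ha.prop)
  obtain ⟨T, hTs, hT, hTk, hTB⟩ := hf.exists_tops hAs hA rfl
  -- Either `a` lies above a top `m`, and removing the part of `m`'s colour class below `m`,
  -- together with `a`, leaves no antichain of size `#A`; or `a` and the tops form an antichain.
  by_cases hTa : ∃ m ∈ T, m ≤ a
  · obtain ⟨m, hmT, hma⟩ := hTa
    set K := insert a (((s.erase a).filter (f · = f m)).filter (· ≤ m))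
    have haK : a ∈ K := mem_insert_self _ _
    have hK : IsChain (· ≤ ·) (K : Set α) := by
      rw [coe_insert]
      refine ((hf.isChain_filter (f m)).mono (coe_subset.2 (filter_subset _ _))).insert
        fun y hy _ => Or.inr ((mem_filter.1 hy).2.trans hma)
    have hKs : K ⊆ s := insert_subset ha.prop
      ((filter_subset _ _).trans ((filter_subset _ _).trans (erase_subset _ _)))
    obtain ⟨B, hBs, hB, g, hg⟩ := ih (s \ K) (sdiff_ssubset hKs ⟨a, haK⟩)
    have hBK : ∀ y ∈ B, y ∉ K := fun y hy => (mem_sdiff.1 (hBs hy)).2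
    have hBs' : B ⊆ s.erase a := fun y hy =>
      mem_erase.2 ⟨fun hya => hBK y hy (hya ▸ haK), (mem_sdiff.1 (hBs hy)).1⟩
    have hBA : #B < #A := hf.card_lt_of_tops hTs hT hTB hmT hBs' hB fun y hy hym hym' =>
      hBK y hy (mem_insert_of_mem (mem_filter.2 ⟨mem_filter.2 ⟨hBs' hy, hym⟩, hym'⟩))
    exact ⟨A, hAs.trans (erase_subset _ _), hA, _,
      hg.extend hK (by rw [sdiff_union_of_subset hKs]) hBA⟩
  · push Not at hTa
    have hB : IsAntichain (· ≤ ·) (↑(insert a T) : Set α) := by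
      rw [coe_insert]
      exact hT.insert (fun b hb _ => hTa b hb)
        fun b hb _ hab => hTa b hb (ha.le_of_ge ((mem_erase.1 (hTs hb)).2) hab)
    refine ⟨insert a T, insert_subset ha.prop (hTs.trans (erase_subset _ _)), hB, _,
      hf.extend (K := {a}) (by simp) has ?_⟩
    rw [card_insert_of_notMem fun haT => (mem_erase.1 (hTs haT)).1 rfl, hTk]
    exact Nat.lt_add_one _

end Dilworth

section Walk

variable {V : Type*} {E : V → V → Prop}

theorem List.IsChain.pairwise_reflTransGen {l : List V} (h : l.IsChain E) :
    l.Pairwise (ReflTransGen E) :=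
  List.isChain_iff_pairwise.1 (h.imp fun _ _ => ReflTransGen.single)

theorem List.IsChain.isChain_reflTransGen {l : List V} (h : l.IsChain E) :
    _root_.IsChain (ReflTransGen E) {x | x ∈ l} :=
  haveI : Std.Symm fun x y => ReflTransGen E x y ∨ ReflTransGen E y x := ⟨fun _ _ => Or.symm⟩
  (h.pairwise_reflTransGen.imp Or.inl).forall

theorem List.IsChain.nodup (hac : Irreflexive (TransGen E)) {l : List V} (h : l.IsChain E) :
    l.Nodup :=
  (List.isChain_iff_pairwise.1 (h.imp fun _ _ => TransGen.single)).imp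
    fun {x y} (hxy : TransGen E x y) (hxy' : x = y) => hac y (hxy' ▸ hxy)

variable (E) in
def IsWalk (u v : V) (l : List V) : Prop :=
  l.IsChain E ∧ l.head? = some u ∧ l.getLast? = some v

namespace IsWalk

variable {u v w : V} {p q : List V}

theorem isSTPath (hac : Irreflexive (TransGen E)) (hp : IsWalk E u v p) : IsSTPath E u v p :=
  ⟨hp.1, hp.1.nodup hac, hp.2⟩

theorem _root_.IsSTPath.isWalk (hp : IsSTPath E u v p) : IsWalk E u v p :=
  ⟨hp.1, hp.2.2⟩

theorem reflTransGen_of_mem (hp : IsWalk E u v p) {x : V} (hx : x ∈ p) :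
    ReflTransGen E u x ∧ ReflTransGen E x v := by
  obtain ⟨hc, hu, hv⟩ := hp
  obtain ⟨p', rfl⟩ := List.head?_eq_some_iff.1 hu
  obtain ⟨p'', hp''⟩ := List.getLast?_eq_some_iff.1 hv
  have hpw := hc.pairwise_reflTransGen
  constructor
  · rcases List.mem_cons.1 hx with rfl | hx
    · exact .refl
    · exact List.rel_of_pairwise_cons hpw hx
  · rw [hp''] at hpw hx
    rcases List.mem_append.1 hx with hx | hx
    · exact (List.pairwise_append.1 hpw).2.2 x hx v (List.mem_singleton_self v)
    · rw [List.mem_singleton.1 hx]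

theorem exists_of_reflTransGen (h : ReflTransGen E u v) : ∃ p, IsWalk E u v p := by
  obtain ⟨p, hp, hc, hu, hv⟩ := List.exists_isChain_ne_nil_of_relationReflTransGen h
  exact ⟨p, hc, by rw [List.head?_eq_some_head hp, hu],
    by rw [List.getLast?_eq_some_getLast hp, hv]⟩

theorem append (hp : IsWalk E u w p) (hq : IsWalk E w v q) : IsWalk E u v (p ++ q.tail) := by
  obtain ⟨hpc, hpu, hpw⟩ := hp
  obtain ⟨hqc, hqw, hqv⟩ := hq
  obtain ⟨q, rfl⟩ := List.head?_eq_some_iff.1 hqw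
  refine ⟨List.isChain_append.2 ⟨hpc, hqc.tail, fun x hx y hy => ?_⟩, ?_, ?_⟩
  · rw [hpw, Option.mem_some_iff] at hx
    exact hx ▸ List.isChain_cons.1 hqc |>.1 y hy
  · simp [List.head?_append, hpu]
  · rcases q with _ | ⟨y, q⟩
    · simpa [hpw] using hqv
    · simpa [List.getLast?_append] using hqv

end IsWalk

theorem exists_isWalk_of_isChain {α : Type*} [Preorder α] {E : α → α → Prop}
    (hE : ∀ ⦃x y : α⦄, x ≤ y → ReflTransGen E x y) {c : Finset α}
    (hc : IsChain (· ≤ ·) (c : Set α)) {u v : α} (huv : u ≤ v) (hu : ∀ x ∈ c, u ≤ x)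
    (hv : ∀ x ∈ c, x ≤ v) : ∃ p, IsWalk E u v p ∧ ∀ x ∈ c, x ∈ p := by
  classical
  induction c using Finset.strongInduction generalizing v with | H c ih =>
  obtain rfl | hne := c.eq_empty_or_nonempty
  · obtain ⟨p, hp⟩ := IsWalk.exists_of_reflTransGen (hE huv)
    exact ⟨p, hp, by simp⟩
  obtain ⟨g, hg, hgc⟩ := hc.exists_isGreatest_of_finset hne
  obtain ⟨p, hp, hpc⟩ := ih (c.erase g) (erase_ssubset hg)
    (hc.mono (coe_subset.2 (erase_subset _ _))) (hu g hg) (fun x hx => hu x (mem_of_mem_erase hx))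
    fun x hx => hgc (mem_of_mem_erase hx)
  obtain ⟨q, hq⟩ := IsWalk.exists_of_reflTransGen (hE (hv g hg))
  refine ⟨p ++ q.tail, hp.append hq, fun x hx => List.mem_append_left _ ?_⟩
  rcases eq_or_ne x g with rfl | hxg
  · exact List.mem_of_getLast? hp.2.2
  · exact hpc x (mem_erase.2 ⟨hxg, hx⟩)

end Walk

abbrev reachabilityOrder {V : Type*} (E : V → V → Prop) (hac : Irreflexive (TransGen E)) :
    PartialOrder V where
  le := ReflTransGen E
  le_refl _ := .refl
  le_trans _ _ _ := ReflTransGen.trans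
  le_antisymm a b hab hba := by
    rcases reflTransGen_iff_eq_or_transGen.1 hab with rfl | hab
    · rfl
    · exact (hac a (hab.trans_left hba)).elim

theorem min_path_cover_eq_max_antichain_general {V : Type*} [Fintype V]
    (E : V → V → Prop) (hac : Irreflexive (Relation.TransGen E)) (s t : V)
    (hcov : ∀ v : V, ∃ p : List V, IsSTPath E s t p ∧ v ∈ p) :
    ∃ k : ℕ,
      IsLeast {m : ℕ | ∃ P : Finset (List V),
          (∀ p ∈ P, IsSTPath E s t p) ∧ (∀ v : V, ∃ p ∈ P, v ∈ p) ∧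
          P.card = m} k ∧
      IsGreatest {m : ℕ | ∃ Q : Finset V,
          (∀ q ∈ Q, ∀ q' ∈ Q, q ≠ q' → ¬ Relation.ReflTransGen E q q') ∧
          Q.card = m} k := by
  classical
  let _ := reachabilityOrder E hac
  obtain ⟨A, -, hA, f, hf⟩ := exists_isAntichain_isChainColoring (univ : Finset V)
  have hst : ∀ v : V, s ≤ v ∧ v ≤ t := fun v =>
    (hcov v).elim fun _ ⟨hp, hvp⟩ => hp.isWalk.reflTransGen_of_mem hvp
  have hpath : ∀ i, ∃ p, IsSTPath E s t p ∧ ∀ v ∈ univ.filter (f · = i), v ∈ p := fun i =>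
    (exists_isWalk_of_isChain (fun _ _ h => h) (hf.isChain_filter i) (hst s).2
      (fun v _ => (hst v).1) fun v _ => (hst v).2).imp fun _ hp => ⟨hp.1.isSTPath hac, hp.2⟩
  choose p hp using hpath
  have hlower : ∀ P : Finset (List V), (∀ q ∈ P, IsSTPath E s t q) →
      (∀ v, ∃ q ∈ P, v ∈ q) → #A ≤ #P := fun P hP hPcov =>
    hA.card_le_of_forall_mem_chain (fun q hq => (hP q hq).1.isChain_reflTransGen)
      fun v _ => hPcov v
  have hP : ∀ q ∈ (range #A).image p, IsSTPath E s t q := by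
    simp only [mem_image]
    rintro _ ⟨i, -, rfl⟩
    exact (hp i).1
  have hPcov : ∀ v, ∃ q ∈ (range #A).image p, v ∈ q := fun v =>
    ⟨p (f v), mem_image_of_mem p (mem_range.2 (hf.1 v (mem_univ v))), (hp _).2 v (by simp)⟩
  refine ⟨#A, ⟨⟨_, hP, hPcov, (card_image_le.trans (card_range _).le).antisymm
    (hlower _ hP hPcov)⟩, fun m ⟨P, hP, hPcov, hm⟩ => hm ▸ hlower P hP hPcov⟩,
    ⟨A, fun q hq q' hq' => hA hq hq', rfl⟩, fun m ⟨Q, hQ, hm⟩ => ?_⟩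
  exact hm ▸ hf.card_le_of_isAntichain (subset_univ Q) fun q hq q' hq' => hQ q hq q' hq'

/-- **Theorem 1(1) of Eriksson et al..** Let `V` be a finite vertex
type, `E` an acyclic directed graph relation (transitive closure irreflexive),
and `s`, `t` vertices such that every vertex lies on some directed `s`–`t` path.
Then the minimum cardinality of a set of `s`–`t` paths covering all vertices
equals the maximum cardinality of a reachability antichain (a finite set of
vertices no two distinct elements of which are reachable from one another under
the reflexive-transitive closure of `E`). -/
theorem min_path_cover_eq_max_antichain {V : Type*} [Fintype V] [DecidableEq V]
    (E : V → V → Prop) (hac : Irreflexive (Relation.TransGen E)) (s t : V)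
    (hcov : ∀ v : V, ∃ p : List V, IsSTPath E s t p ∧ v ∈ p) :
    ∃ k : ℕ,
      IsLeast {m : ℕ | ∃ P : Finset (List V),
          (∀ p ∈ P, IsSTPath E s t p) ∧ (∀ v : V, ∃ p ∈ P, v ∈ p) ∧
          P.card = m} k ∧
      IsGreatest {m : ℕ | ∃ Q : Finset V,
          (∀ q ∈ Q, ∀ q' ∈ Q, q ≠ q' → ¬ Relation.ReflTransGen E q q') ∧
          Q.card = m} k :=
  min_path_cover_eq_max_antichain_general E hac s t hcov
end

section
/- Let R be a finite set of reads over alphabet A for a genome of length n ≥ 1, and let r_1, …, r_k be a covering chain in R. Then there exists exactly one haplotype h : Fin n → A that is consistent with every read r_1, …, r_k of the chain. -/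
/-! Basic definitions about reads, following Eriksson et al.,
"Viral population estimation using pyrosequencing".

A read is a pair `r = (s, w)` of a start position `s : ℕ` and a word
`w : List A`; it covers positions `s, …, s + w.length - 1`. -/

/-- The read `r` covers position `p`. -/
def Covers {A : Type*} (r : ℕ × List A) (p : ℕ) : Prop :=
  r.1 ≤ p ∧ p < r.1 + r.2.length

/-- Two reads agree on their overlap: at every position covered by both, the
corresponding letters of the two reads are equal. -/
def Agree {A : Type*} (r r' : ℕ × List A) : Prop :=
  ∀ p, (hp : Covers r p) → (hp' : Covers r' p) →
    r.2.get ⟨p - r.1, by have h1 := hp.1; have h2 := hp.2; omega⟩ =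
    r'.2.get ⟨p - r'.1, by have h1 := hp'.1; have h2 := hp'.2; omega⟩

/-- Two reads overlap: some position is covered by both. -/
def Overlaps {A : Type*} (r r' : ℕ × List A) : Prop :=
  ∃ p, Covers r p ∧ Covers r' p

/-- A valid read for a genome of length `n`: nonempty word, fitting inside the
genome. -/
def ValidRead {A : Type*} (n : ℕ) (r : ℕ × List A) : Prop :=
  r.2 ≠ [] ∧ r.1 + r.2.length ≤ n

/-- The haplotype `h : Fin n → A` is consistent with the read `r`. -/
def Consistent {A : Type*} (n : ℕ) (h : Fin n → A) (r : ℕ × List A) : Prop :=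
  ∀ i, (hi : i < r.2.length) → (hn : r.1 + i < n) →
    h ⟨r.1 + i, hn⟩ = r.2.get ⟨i, hi⟩

/-- A read `r` is redundant in `R` if some other read of `R` covers all positions
of `r` and agrees with `r` on their overlap. -/
def Redundant {A : Type*} (R : Finset (ℕ × List A)) (r : ℕ × List A) : Prop :=
  ∃ r' ∈ R, r' ≠ r ∧ (∀ p, Covers r p → Covers r' p) ∧ Agree r r'

/-- A covering chain in `R` for a genome of length `n`: a nonempty sequence of
reads of `R` with nondecreasing start positions and nondecreasing end
positions, whose first read covers position `0`, whose last read covers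
position `n - 1`, and in which each consecutive pair of reads overlaps and
agrees on its overlap. -/
def CoveringChain {A : Type*} (n : ℕ) (R : Finset (ℕ × List A))
    (c : List (ℕ × List A)) : Prop :=
  c ≠ [] ∧ (∀ r ∈ c, r ∈ R) ∧
  c.Chain' (fun r r' => r.1 ≤ r'.1) ∧
  c.Chain' (fun r r' => r.1 + r.2.length ≤ r'.1 + r'.2.length) ∧
  (∀ r ∈ c.head?, Covers r 0) ∧
  (∀ r ∈ c.getLast?, Covers r (n - 1)) ∧
  c.Chain' (fun r r' => Overlaps r r' ∧ Agree r r')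

/-- A haplotype is completely consistent with `R` if it can be constructed from a
covering chain of reads of `R`: i.e., some covering chain in `R` consists of
reads all consistent with the haplotype. -/
def CompletelyConsistent {A : Type*} (n : ℕ) (R : Finset (ℕ × List A))
    (h : Fin n → A) : Prop :=
  ∃ c, CoveringChain n R c ∧ ∀ r ∈ c, Consistent n h r

/-! Along a covering chain the reads have nondecreasing start and end positions, so whenever
two reads of the chain cover a common position, so does every read between them; agreement
of consecutive reads therefore propagates to agreement of any two reads of the chain. Since
consecutive reads overlap, the chain also covers every position `0, …, n - 1`. The haplotype
is then read off from any read covering each position, and it is the only one consistent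
with the chain. -/

section

variable {A : Type*}

def Covers.letter {r : ℕ × List A} {p : ℕ} (hp : Covers r p) : A :=
  r.2.get ⟨p - r.1, by have := hp.1; have := hp.2; omega⟩

theorem consistent_iff_forall_eq_letter {n : ℕ} {h : Fin n → A} {r : ℕ × List A} :
    Consistent n h r ↔ ∀ p (hpn : p < n) (hp : Covers r p), h ⟨p, hpn⟩ = hp.letter := by
  constructor
  · intro hcons p hpn hp
    obtain ⟨i, rfl⟩ := Nat.exists_eq_add_of_le hp.1
    simpa [Covers.letter] using hcons i (by have := hp.2; omega) hpn
  · intro hcons i hi hn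
    simpa [Covers.letter] using hcons (r.1 + i) hn ⟨Nat.le_add_right _ _, by omega⟩

theorem Agree.refl (r : ℕ × List A) : Agree r r := fun _ _ _ => rfl

theorem Agree.symm {r r' : ℕ × List A} (h : Agree r r') : Agree r' r :=
  fun p hp hp' => (h p hp' hp).symm

def PrecedesAgreeing (r r' : ℕ × List A) : Prop :=
  r.1 ≤ r'.1 ∧ r.1 + r.2.length ≤ r'.1 + r'.2.length ∧ Agree r r'

theorem PrecedesAgreeing.trans {r₁ r₂ r₃ : ℕ × List A} (h₁₂ : PrecedesAgreeing r₁ r₂)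
    (h₂₃ : PrecedesAgreeing r₂ r₃) : PrecedesAgreeing r₁ r₃ := by
  obtain ⟨hs₁₂, he₁₂, ha₁₂⟩ := h₁₂
  obtain ⟨hs₂₃, he₂₃, ha₂₃⟩ := h₂₃
  refine ⟨hs₁₂.trans hs₂₃, he₁₂.trans he₂₃, fun p hp₁ hp₃ => ?_⟩
  have hp₂ : Covers r₂ p := ⟨hs₂₃.trans hp₃.1, hp₁.2.trans_le he₁₂⟩
  exact (ha₁₂ p hp₁ hp₂).trans (ha₂₃ p hp₂ hp₃)

instance : Trans (@PrecedesAgreeing A) PrecedesAgreeing PrecedesAgreeing :=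
  ⟨PrecedesAgreeing.trans⟩

theorem List.IsChain.and {α : Type*} {R S : α → α → Prop} {l : List α} (hR : l.IsChain R)
    (hS : l.IsChain S) : l.IsChain fun a b => R a b ∧ S a b :=
  isChain_iff_getElem.mpr fun i hi =>
    ⟨isChain_iff_getElem.mp hR i hi, isChain_iff_getElem.mp hS i hi⟩

theorem exists_mem_covers_of_isChain_overlaps :
    ∀ {r : ℕ × List A} {l : List (ℕ × List A)}, (r :: l).IsChain Overlaps →
      ∀ {p : ℕ} {s : ℕ × List A}, r.1 ≤ p → s ∈ r :: l → p < s.1 + s.2.length →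
        ∃ r' ∈ r :: l, Covers r' p
  | r, [], _, _, _, hrp, hs, hps => by
    rw [List.mem_singleton.mp hs] at hps
    exact ⟨r, List.mem_singleton_self r, hrp, hps⟩
  | r, b :: l, hch, p, s, hrp, hs, hps => by
    by_cases hpr : p < r.1 + r.2.length
    · exact ⟨r, List.mem_cons_self, hrp, hpr⟩
    rw [List.isChain_cons_cons] at hch
    obtain ⟨⟨q, hqr, hqb⟩, hch⟩ := hch
    have hs' : s ∈ b :: l :=
      (List.mem_cons.mp hs).resolve_left (by rintro rfl; exact hpr hps)
    obtain ⟨r', hr', hcov⟩ :=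
      exists_mem_covers_of_isChain_overlaps hch (by have := hqb.1; have := hqr.2; omega) hs' hps
    exact ⟨r', List.mem_cons_of_mem r hr', hcov⟩

namespace CoveringChain

variable {n : ℕ} {R : Finset (ℕ × List A)} {c : List (ℕ × List A)}

theorem exists_mem_covers (hc : CoveringChain n R c) {p : ℕ} (hp : p < n) :
    ∃ r ∈ c, Covers r p := by
  obtain ⟨hne, -, -, -, hhead, hlast, hov⟩ := hc
  obtain ⟨r, l, rfl⟩ := List.exists_cons_of_ne_nil hne
  have hcovLast := hlast _ (List.getLast?_eq_some_getLast (List.cons_ne_nil r l))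
  exact exists_mem_covers_of_isChain_overlaps (hov.imp fun _ _ => And.left)
    ((hhead r rfl).1.trans (Nat.zero_le p)) (List.getLast_mem _)
    (by have := hcovLast.2; omega)

theorem agree (hc : CoveringChain n R c) {r r' : ℕ × List A} (hr : r ∈ c) (hr' : r' ∈ c) :
    Agree r r' := by
  obtain ⟨-, -, hs, he, -, -, hov⟩ := hc
  have hchain : c.IsChain PrecedesAgreeing := hs.and (he.and (hov.imp fun _ _ => And.right))
  have hpw := hchain.pairwise
  exact (hpw.imp (·.2.2)).forall_of_forall_of_flip (fun r _ => Agree.refl r)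
    (hpw.imp (·.2.2.symm)) hr hr'

end CoveringChain

end

theorem coveringChain_unique_haplotype_general {A : Type*} (n : ℕ)
    (R : Finset (ℕ × List A))
    (c : List (ℕ × List A)) (hc : CoveringChain n R c) :
    ∃! h : Fin n → A, ∀ r ∈ c, Consistent n h r := by
  choose r hrc hcov using fun p : Fin n => hc.exists_mem_covers p.isLt
  refine ⟨fun p => (hcov p).letter, fun r' hr' => ?_, fun h hh => funext fun p => ?_⟩
  · exact consistent_iff_forall_eq_letter.mpr fun p hpn hp => hc.agree (hrc _) hr' p (hcov _) hp
  · exact consistent_iff_forall_eq_letter.mp (hh _ (hrc p)) p p.isLt (hcov p)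

/-- A covering chain in `R` (for a genome of length `n ≥ 1`,
with all reads of `R` valid) determines exactly one haplotype: there is a unique
`h : Fin n → A` consistent with every read of the chain. -/
theorem coveringChain_unique_haplotype {A : Type*} (n : ℕ) (hn : 1 ≤ n)
    (R : Finset (ℕ × List A)) (hvalid : ∀ r ∈ R, ValidRead n r)
    (c : List (ℕ × List A)) (hc : CoveringChain n R c) :
    ∃! h : Fin n → A, ∀ r ∈ c, Consistent n h r :=
  coveringChain_unique_haplotype_general n R c hc
end
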